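/- Let σ₁, σ₂, σ₃ be reals, not all zero, with σ₁ + σ₂ + σ₃ = 0, and set σ₀ = √(−(σ₁σ₂ + σ₂σ₃ + σ₃σ₁)/3) (the radicand is positive). Assume σᵢ + σ₀ ≠ 0 and σᵢ − σ₀ ≠ 0 for i = 1,2,3. Let u₊ (respectively u₋) be the positive scalar multiple of (1/(σ₁±σ₀), 1/(σ₂±σ₀), 1/(σ₃±σ₀)) of unit norm, with the + sign (respectively − sign). Then n = (1/√3, 1/√3, 1/√3), v₁ = (u₋ − u₊)/√2 and v₂ = (u₋ + u₊)/√2 form a pure shear basis: {n, v₁, v₂} is an orthonormal basis of ℝ³ and σ_nn = σ_{v₁v₁} = σ_{v₂v₂} = 0. -/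

import Mathlib

/-!
Write `x(e) = (1/(σ₁+e), 1/(σ₂+e), 1/(σ₃+e))`, so that `u±` is the normalization of `x(±σ₀)`.
For `f(t) = (t - σ₁)(t - σ₂)(t - σ₃)` one has `∑ 1/(σᵢ+e) = -f'(-e)/f(-e)`, and for a pure shear
`f'(t) = 3t² + σ₁σ₂ + σ₂σ₃ + σ₃σ₁`, whose roots are `±σ₀`; hence `x(±σ₀)` is orthogonal to `n`.
With `σᵢ/(σᵢ+e)² = 1/(σᵢ+e) - e/(σᵢ+e)²` this gives `σ_{u±u±} = ∓σ₀`, and partial fractions show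
that `u₊` and `u₋` are orthogonal both for the inner product and for the stress form. Rotating the
orthonormal pair `(u₋, u₊)` by 45° in its plane then averages `σ₀` and `-σ₀` to zero.
-/

noncomputable section

def dot3 (x y : ℝ × ℝ × ℝ) : ℝ := x.1 * y.1 + x.2.1 * y.2.1 + x.2.2 * y.2.2

def smul3 (t : ℝ) (x : ℝ × ℝ × ℝ) : ℝ × ℝ × ℝ := (t * x.1, t * x.2.1, t * x.2.2)
def add3 (x y : ℝ × ℝ × ℝ) : ℝ × ℝ × ℝ := (x.1 + y.1, x.2.1 + y.2.1, x.2.2 + y.2.2)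
def sub3 (x y : ℝ × ℝ × ℝ) : ℝ × ℝ × ℝ := (x.1 - y.1, x.2.1 - y.2.1, x.2.2 - y.2.2)

/-- σ₀ = √(−(σ₁σ₂ + σ₂σ₃ + σ₃σ₁)/3). -/
def sigma0 (σ₁ σ₂ σ₃ : ℝ) : ℝ := Real.sqrt (-(σ₁*σ₂ + σ₂*σ₃ + σ₃*σ₁) / 3)

/-- The positive unit multiple of (1/(σ₁+e), 1/(σ₂+e), 1/(σ₃+e)). -/
def usig (σ₁ σ₂ σ₃ e : ℝ) : ℝ × ℝ × ℝ :=
  smul3 (1 / Real.sqrt (1/(σ₁+e)^2 + 1/(σ₂+e)^2 + 1/(σ₃+e)^2))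
    (1/(σ₁+e), 1/(σ₂+e), 1/(σ₃+e))

/-- u₊ (with the + sign). -/
def usigplus (σ₁ σ₂ σ₃ : ℝ) : ℝ × ℝ × ℝ := usig σ₁ σ₂ σ₃ (sigma0 σ₁ σ₂ σ₃)

/-- u₋ (with the − sign). -/
def usigminus (σ₁ σ₂ σ₃ : ℝ) : ℝ × ℝ × ℝ := usig σ₁ σ₂ σ₃ (-(sigma0 σ₁ σ₂ σ₃))

/-- The cube diagonal direction n = (1,1,1)/√3. -/
def ndiag : ℝ × ℝ × ℝ := (1 / Real.sqrt 3, 1 / Real.sqrt 3, 1 / Real.sqrt 3)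

/-- v₁ = (u₋ − u₊)/√2. -/
def w1 (σ₁ σ₂ σ₃ : ℝ) : ℝ × ℝ × ℝ :=
  smul3 (1 / Real.sqrt 2) (sub3 (usigminus σ₁ σ₂ σ₃) (usigplus σ₁ σ₂ σ₃))

/-- v₂ = (u₋ + u₊)/√2. -/
def w2 (σ₁ σ₂ σ₃ : ℝ) : ℝ × ℝ × ℝ :=
  smul3 (1 / Real.sqrt 2) (add3 (usigminus σ₁ σ₂ σ₃) (usigplus σ₁ σ₂ σ₃))

/-- σ_xx = σ₁x₁² + σ₂x₂² + σ₃x₃². -/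
def sigQ (σ₁ σ₂ σ₃ : ℝ) (x : ℝ × ℝ × ℝ) : ℝ := σ₁ * x.1^2 + σ₂ * x.2.1^2 + σ₃ * x.2.2^2

open Real

def sigB (σ₁ σ₂ σ₃ : ℝ) (x y : ℝ × ℝ × ℝ) : ℝ :=
  σ₁ * x.1 * y.1 + σ₂ * x.2.1 * y.2.1 + σ₃ * x.2.2 * y.2.2

def invShift (σ₁ σ₂ σ₃ e : ℝ) : ℝ × ℝ × ℝ := (1 / (σ₁ + e), 1 / (σ₂ + e), 1 / (σ₃ + e))

section Rotation

variable (σ₁ σ₂ σ₃ a b : ℝ) (u v x y : ℝ × ℝ × ℝ)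

lemma dot3_smul3_smul3 : dot3 (smul3 a x) (smul3 b y) = a * b * dot3 x y := by
  simp only [dot3, smul3]; ring

lemma sigB_smul3_smul3 : sigB σ₁ σ₂ σ₃ (smul3 a x) (smul3 b y) = a * b * sigB σ₁ σ₂ σ₃ x y := by
  simp only [sigB, smul3]; ring

lemma sigQ_smul3 : sigQ σ₁ σ₂ σ₃ (smul3 a x) = a ^ 2 * sigQ σ₁ σ₂ σ₃ x := by
  simp only [sigQ, smul3]; ring

lemma one_div_sqrt_two_mul_self : (1 / √2 : ℝ) * (1 / √2) = 1 / 2 := by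
  rw [← sq, div_pow, one_pow, sq_sqrt zero_le_two]

lemma dot3_smul3_sub3_self :
    dot3 (smul3 (1 / √2) (sub3 u v)) (smul3 (1 / √2) (sub3 u v))
      = (dot3 u u + dot3 v v) / 2 - dot3 u v := by
  rw [dot3_smul3_smul3, one_div_sqrt_two_mul_self]
  simp only [dot3, sub3]; ring

lemma dot3_smul3_add3_self :
    dot3 (smul3 (1 / √2) (add3 u v)) (smul3 (1 / √2) (add3 u v))
      = (dot3 u u + dot3 v v) / 2 + dot3 u v := by
  rw [dot3_smul3_smul3, one_div_sqrt_two_mul_self]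
  simp only [dot3, add3]; ring

lemma dot3_smul3_sub3_smul3_add3 :
    dot3 (smul3 (1 / √2) (sub3 u v)) (smul3 (1 / √2) (add3 u v)) = (dot3 u u - dot3 v v) / 2 := by
  rw [dot3_smul3_smul3, one_div_sqrt_two_mul_self]
  simp only [dot3, sub3, add3]; ring

lemma dot3_smul3_sub3 :
    dot3 x (smul3 a (sub3 u v)) = a * (dot3 x u - dot3 x v) := by
  simp only [dot3, smul3, sub3]; ring

lemma dot3_smul3_add3 :
    dot3 x (smul3 a (add3 u v)) = a * (dot3 x u + dot3 x v) := by
  simp only [dot3, smul3, add3]; ring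

lemma sigQ_smul3_sub3 :
    sigQ σ₁ σ₂ σ₃ (smul3 (1 / √2) (sub3 u v))
      = (sigQ σ₁ σ₂ σ₃ u + sigQ σ₁ σ₂ σ₃ v) / 2 - sigB σ₁ σ₂ σ₃ u v := by
  rw [sigQ_smul3, sq, one_div_sqrt_two_mul_self]
  simp only [sigQ, sigB, sub3]; ring

lemma sigQ_smul3_add3 :
    sigQ σ₁ σ₂ σ₃ (smul3 (1 / √2) (add3 u v))
      = (sigQ σ₁ σ₂ σ₃ u + sigQ σ₁ σ₂ σ₃ v) / 2 + sigB σ₁ σ₂ σ₃ u v := by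
  rw [sigQ_smul3, sq, one_div_sqrt_two_mul_self]
  simp only [sigQ, sigB, add3]; ring

end Rotation

lemma rotate_orthonormal_pair_sigQ_eq_zero {σ₁ σ₂ σ₃ : ℝ} {u v n : ℝ × ℝ × ℝ}
    (hu : dot3 u u = 1) (hv : dot3 v v = 1) (huv : dot3 u v = 0)
    (hnu : dot3 n u = 0) (hnv : dot3 n v = 0)
    (hQ : sigQ σ₁ σ₂ σ₃ u + sigQ σ₁ σ₂ σ₃ v = 0) (hB : sigB σ₁ σ₂ σ₃ u v = 0) :
    dot3 (smul3 (1 / √2) (sub3 u v)) (smul3 (1 / √2) (sub3 u v)) = 1 ∧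
    dot3 (smul3 (1 / √2) (add3 u v)) (smul3 (1 / √2) (add3 u v)) = 1 ∧
    dot3 n (smul3 (1 / √2) (sub3 u v)) = 0 ∧
    dot3 n (smul3 (1 / √2) (add3 u v)) = 0 ∧
    dot3 (smul3 (1 / √2) (sub3 u v)) (smul3 (1 / √2) (add3 u v)) = 0 ∧
    sigQ σ₁ σ₂ σ₃ (smul3 (1 / √2) (sub3 u v)) = 0 ∧
    sigQ σ₁ σ₂ σ₃ (smul3 (1 / √2) (add3 u v)) = 0 := by
  rw [dot3_smul3_sub3_self, dot3_smul3_add3_self, dot3_smul3_sub3, dot3_smul3_add3,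
    dot3_smul3_sub3_smul3_add3, sigQ_smul3_sub3, sigQ_smul3_add3, hu, hv, huv, hnu, hnv, hQ, hB]
  norm_num

section InvShift

variable {σ₁ σ₂ σ₃ e s : ℝ}

lemma sum_one_div_add_eq_zero (hsum : σ₁ + σ₂ + σ₃ = 0)
    (he : 3 * e ^ 2 + (σ₁ * σ₂ + σ₂ * σ₃ + σ₃ * σ₁) = 0)
    (h₁ : σ₁ + e ≠ 0) (h₂ : σ₂ + e ≠ 0) (h₃ : σ₃ + e ≠ 0) :
    1 / (σ₁ + e) + 1 / (σ₂ + e) + 1 / (σ₃ + e) = 0 := by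
  field_simp
  linear_combination 2 * e * hsum + he

lemma dot3_invShift_self_pos (h₁ : σ₁ + e ≠ 0) (h₂ : σ₂ + e ≠ 0) (h₃ : σ₃ + e ≠ 0) :
    0 < dot3 (invShift σ₁ σ₂ σ₃ e) (invShift σ₁ σ₂ σ₃ e) := by
  simp only [dot3, invShift, ← sq]
  positivity

lemma usig_eq_smul3_invShift :
    usig σ₁ σ₂ σ₃ e = smul3 (1 / √(dot3 (invShift σ₁ σ₂ σ₃ e) (invShift σ₁ σ₂ σ₃ e)))
      (invShift σ₁ σ₂ σ₃ e) := by
  simp only [usig, dot3, invShift, ← sq, div_pow, one_pow]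

lemma sigQ_invShift (hcrit : 1 / (σ₁ + e) + 1 / (σ₂ + e) + 1 / (σ₃ + e) = 0)
    (h₁ : σ₁ + e ≠ 0) (h₂ : σ₂ + e ≠ 0) (h₃ : σ₃ + e ≠ 0) :
    sigQ σ₁ σ₂ σ₃ (invShift σ₁ σ₂ σ₃ e)
      = -e * dot3 (invShift σ₁ σ₂ σ₃ e) (invShift σ₁ σ₂ σ₃ e) := by
  have key : ∀ t, t + e ≠ 0 → t * (1 / (t + e)) ^ 2 = 1 / (t + e) - e * (1 / (t + e)) ^ 2 := by
    intro t ht; field_simp; ring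
  simp only [sigQ, dot3, invShift]
  rw [key σ₁ h₁, key σ₂ h₂, key σ₃ h₃]
  linear_combination hcrit

lemma dot3_invShift_neg (hs : s ≠ 0)
    (hcm : 1 / (σ₁ + -s) + 1 / (σ₂ + -s) + 1 / (σ₃ + -s) = 0)
    (hcp : 1 / (σ₁ + s) + 1 / (σ₂ + s) + 1 / (σ₃ + s) = 0)
    (hm₁ : σ₁ + -s ≠ 0) (hm₂ : σ₂ + -s ≠ 0) (hm₃ : σ₃ + -s ≠ 0)
    (hp₁ : σ₁ + s ≠ 0) (hp₂ : σ₂ + s ≠ 0) (hp₃ : σ₃ + s ≠ 0) :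
    dot3 (invShift σ₁ σ₂ σ₃ (-s)) (invShift σ₁ σ₂ σ₃ s) = 0 := by
  have key : ∀ t, t + -s ≠ 0 → t + s ≠ 0 →
      1 / (t + -s) * (1 / (t + s)) = (1 / (t + -s) - 1 / (t + s)) / (2 * s) := by
    intro t hm hp; field_simp; ring
  simp only [dot3, invShift]
  rw [key σ₁ hm₁ hp₁, key σ₂ hm₂ hp₂, key σ₃ hm₃ hp₃]
  linear_combination (hcm - hcp) / (2 * s)

lemma sigB_invShift_neg
    (hcm : 1 / (σ₁ + -s) + 1 / (σ₂ + -s) + 1 / (σ₃ + -s) = 0)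
    (hcp : 1 / (σ₁ + s) + 1 / (σ₂ + s) + 1 / (σ₃ + s) = 0)
    (hm₁ : σ₁ + -s ≠ 0) (hm₂ : σ₂ + -s ≠ 0) (hm₃ : σ₃ + -s ≠ 0)
    (hp₁ : σ₁ + s ≠ 0) (hp₂ : σ₂ + s ≠ 0) (hp₃ : σ₃ + s ≠ 0) :
    sigB σ₁ σ₂ σ₃ (invShift σ₁ σ₂ σ₃ (-s)) (invShift σ₁ σ₂ σ₃ s) = 0 := by
  have key : ∀ t, t + -s ≠ 0 → t + s ≠ 0 →
      t * (1 / (t + -s)) * (1 / (t + s)) = (1 / (t + -s) + 1 / (t + s)) / 2 := by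
    intro t hm hp; field_simp; ring
  simp only [sigB, invShift]
  rw [key σ₁ hm₁ hp₁, key σ₂ hm₂ hp₂, key σ₃ hm₃ hp₃]
  linear_combination (hcm + hcp) / 2

lemma dot3_usig_self (h₁ : σ₁ + e ≠ 0) (h₂ : σ₂ + e ≠ 0) (h₃ : σ₃ + e ≠ 0) :
    dot3 (usig σ₁ σ₂ σ₃ e) (usig σ₁ σ₂ σ₃ e) = 1 := by
  have hpos := dot3_invShift_self_pos h₁ h₂ h₃
  rw [usig_eq_smul3_invShift, dot3_smul3_smul3, ← sq, div_pow, one_pow, sq_sqrt hpos.le,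
    one_div_mul_cancel hpos.ne']

lemma dot3_ndiag_usig (hcrit : 1 / (σ₁ + e) + 1 / (σ₂ + e) + 1 / (σ₃ + e) = 0) :
    dot3 ndiag (usig σ₁ σ₂ σ₃ e) = 0 := by
  simp only [dot3, ndiag, usig, smul3]
  linear_combination 1 / √3 * (1 / √(1 / (σ₁ + e) ^ 2 + 1 / (σ₂ + e) ^ 2 + 1 / (σ₃ + e) ^ 2))
    * hcrit

lemma sigQ_usig (hcrit : 1 / (σ₁ + e) + 1 / (σ₂ + e) + 1 / (σ₃ + e) = 0)
    (h₁ : σ₁ + e ≠ 0) (h₂ : σ₂ + e ≠ 0) (h₃ : σ₃ + e ≠ 0) :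
    sigQ σ₁ σ₂ σ₃ (usig σ₁ σ₂ σ₃ e) = -e := by
  have hpos := dot3_invShift_self_pos h₁ h₂ h₃
  rw [usig_eq_smul3_invShift, sigQ_smul3, sigQ_invShift hcrit h₁ h₂ h₃, div_pow, one_pow,
    sq_sqrt hpos.le]
  field_simp

lemma dot3_usig_neg_usig (hs : s ≠ 0)
    (hcm : 1 / (σ₁ + -s) + 1 / (σ₂ + -s) + 1 / (σ₃ + -s) = 0)
    (hcp : 1 / (σ₁ + s) + 1 / (σ₂ + s) + 1 / (σ₃ + s) = 0)
    (hm₁ : σ₁ + -s ≠ 0) (hm₂ : σ₂ + -s ≠ 0) (hm₃ : σ₃ + -s ≠ 0)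
    (hp₁ : σ₁ + s ≠ 0) (hp₂ : σ₂ + s ≠ 0) (hp₃ : σ₃ + s ≠ 0) :
    dot3 (usig σ₁ σ₂ σ₃ (-s)) (usig σ₁ σ₂ σ₃ s) = 0 := by
  rw [usig_eq_smul3_invShift, usig_eq_smul3_invShift, dot3_smul3_smul3,
    dot3_invShift_neg hs hcm hcp hm₁ hm₂ hm₃ hp₁ hp₂ hp₃, mul_zero]

lemma sigB_usig_neg_usig
    (hcm : 1 / (σ₁ + -s) + 1 / (σ₂ + -s) + 1 / (σ₃ + -s) = 0)
    (hcp : 1 / (σ₁ + s) + 1 / (σ₂ + s) + 1 / (σ₃ + s) = 0)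
    (hm₁ : σ₁ + -s ≠ 0) (hm₂ : σ₂ + -s ≠ 0) (hm₃ : σ₃ + -s ≠ 0)
    (hp₁ : σ₁ + s ≠ 0) (hp₂ : σ₂ + s ≠ 0) (hp₃ : σ₃ + s ≠ 0) :
    sigB σ₁ σ₂ σ₃ (usig σ₁ σ₂ σ₃ (-s)) (usig σ₁ σ₂ σ₃ s) = 0 := by
  rw [usig_eq_smul3_invShift, usig_eq_smul3_invShift, sigB_smul3_smul3,
    sigB_invShift_neg hcm hcp hm₁ hm₂ hm₃ hp₁ hp₂ hp₃, mul_zero]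

end InvShift

lemma dot3_ndiag_self : dot3 ndiag ndiag = 1 := by
  simp only [dot3, ndiag, ← sq, div_pow, one_pow, sq_sqrt zero_le_three]; norm_num

lemma sigQ_ndiag (σ₁ σ₂ σ₃ : ℝ) : sigQ σ₁ σ₂ σ₃ ndiag = (σ₁ + σ₂ + σ₃) / 3 := by
  simp only [sigQ, ndiag, div_pow, one_pow, sq_sqrt zero_le_three]; ring

lemma sigma0_radicand_pos {σ₁ σ₂ σ₃ : ℝ} (hne : ¬(σ₁ = 0 ∧ σ₂ = 0 ∧ σ₃ = 0))
    (hsum : σ₁ + σ₂ + σ₃ = 0) : 0 < -(σ₁ * σ₂ + σ₂ * σ₃ + σ₃ * σ₁) / 3 := by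
  have hsq : σ₁ ^ 2 + σ₂ ^ 2 + σ₃ ^ 2 = -2 * (σ₁ * σ₂ + σ₂ * σ₃ + σ₃ * σ₁) := by
    linear_combination (σ₁ + σ₂ + σ₃) * hsum
  have hpos : 0 < σ₁ ^ 2 + σ₂ ^ 2 + σ₃ ^ 2 := by
    rcases not_and_or.1 hne with h | h
    · positivity
    rcases not_and_or.1 h with h | h <;> positivity
  linarith

/-- for a nonzero pure shear state, the 111 direction together with
v₁ = (u₋−u₊)/√2 and v₂ = (u₋+u₊)/√2 forms a pure shear basis (and the radicand of σ₀
is positive). -/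
theorem stmt16 (σ₁ σ₂ σ₃ : ℝ)
    (hne : ¬(σ₁ = 0 ∧ σ₂ = 0 ∧ σ₃ = 0))
    (hshear : σ₁ + σ₂ + σ₃ = 0)
    (h1p : σ₁ + sigma0 σ₁ σ₂ σ₃ ≠ 0) (h2p : σ₂ + sigma0 σ₁ σ₂ σ₃ ≠ 0)
    (h3p : σ₃ + sigma0 σ₁ σ₂ σ₃ ≠ 0)
    (h1m : σ₁ - sigma0 σ₁ σ₂ σ₃ ≠ 0) (h2m : σ₂ - sigma0 σ₁ σ₂ σ₃ ≠ 0)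
    (h3m : σ₃ - sigma0 σ₁ σ₂ σ₃ ≠ 0) :
    -- the radicand of σ₀ is positive
    0 < -(σ₁*σ₂ + σ₂*σ₃ + σ₃*σ₁) / 3 ∧
    -- {n, v₁, v₂} is an orthonormal basis of ℝ³ ...
    (dot3 ndiag ndiag = 1 ∧
     dot3 (w1 σ₁ σ₂ σ₃) (w1 σ₁ σ₂ σ₃) = 1 ∧
     dot3 (w2 σ₁ σ₂ σ₃) (w2 σ₁ σ₂ σ₃) = 1 ∧
     dot3 ndiag (w1 σ₁ σ₂ σ₃) = 0 ∧
     dot3 ndiag (w2 σ₁ σ₂ σ₃) = 0 ∧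
     dot3 (w1 σ₁ σ₂ σ₃) (w2 σ₁ σ₂ σ₃) = 0) ∧
    -- ... and a pure shear basis: σ_nn = σ_{v₁v₁} = σ_{v₂v₂} = 0.
    (sigQ σ₁ σ₂ σ₃ ndiag = 0 ∧
     sigQ σ₁ σ₂ σ₃ (w1 σ₁ σ₂ σ₃) = 0 ∧
     sigQ σ₁ σ₂ σ₃ (w2 σ₁ σ₂ σ₃) = 0) := by
  have hrad := sigma0_radicand_pos hne hshear
  set s := sigma0 σ₁ σ₂ σ₃
  have hs2 : s ^ 2 = -(σ₁ * σ₂ + σ₂ * σ₃ + σ₃ * σ₁) / 3 := sq_sqrt hrad.le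
  have he : 3 * s ^ 2 + (σ₁ * σ₂ + σ₂ * σ₃ + σ₃ * σ₁) = 0 := by linear_combination 3 * hs2
  have hm₁ : σ₁ + -s ≠ 0 := by rwa [← sub_eq_add_neg]
  have hm₂ : σ₂ + -s ≠ 0 := by rwa [← sub_eq_add_neg]
  have hm₃ : σ₃ + -s ≠ 0 := by rwa [← sub_eq_add_neg]
  have hcp := sum_one_div_add_eq_zero hshear he h1p h2p h3p
  have hcm := sum_one_div_add_eq_zero hshear (by linear_combination he) hm₁ hm₂ hm₃
  obtain ⟨hw1, hw2, hnw1, hnw2, hw12, hQw1, hQw2⟩ := rotate_orthonormal_pair_sigQ_eq_zero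
    (dot3_usig_self hm₁ hm₂ hm₃) (dot3_usig_self h1p h2p h3p)
    (dot3_usig_neg_usig (sqrt_pos.2 hrad).ne' hcm hcp hm₁ hm₂ hm₃ h1p h2p h3p)
    (dot3_ndiag_usig hcm) (dot3_ndiag_usig hcp)
    (by rw [sigQ_usig hcm hm₁ hm₂ hm₃, sigQ_usig hcp h1p h2p h3p]; ring)
    (sigB_usig_neg_usig hcm hcp hm₁ hm₂ hm₃ h1p h2p h3p)
  exact ⟨hrad, ⟨dot3_ndiag_self, hw1, hw2, hnw1, hnw2, hw12⟩,
    by rw [sigQ_ndiag, hshear, zero_div], hQw1, hQw2⟩
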